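/- arXiv:2601.00375 — 3 statements merged into one kernel-verified Lean document; each statement's English description precedes it below -/
import Mathlib

section
/- Let B ∈ ℝ^{n×n} be a symmetric matrix and F = {x ∈ ℝ^n : xᵀBx = 0}. Then the recession cone of F is REC_F = {y ∈ ℝ^n : yᵀBy = 0 and xᵀBy = 0 for all x ∈ F}. -/
open Finset Matrix Pointwise

noncomputable section

/-- An order-`d`, dimension-`n` real tensor: entries indexed by `Fin d → Fin n`. -/
abbrev Tensor (d n : ℕ) : Type := (Fin d → Fin n) → ℝ

/-- Entrywise inner product of two tensors. -/
def tInner {d n : ℕ} (A B : Tensor d n) : ℝ := ∑ i : Fin d → Fin n, A i * B i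

/-- `Md d x` is the `d`-fold symmetric outer product of the vector `x`. -/
def Md {n : ℕ} (d : ℕ) (x : Fin n → ℝ) : Tensor d n := fun i => ∏ t, x (i t)

/-- A tensor is symmetric if its entries are invariant under permutations of the indices. -/
def IsSymT {d n : ℕ} (A : Tensor d n) : Prop :=
  ∀ (σ : Equiv.Perm (Fin d)) (i : Fin d → Fin n), A (i ∘ σ) = A i

/-- The recession cone of a set `F`. -/
def recCone {n : ℕ} (F : Set (Fin n → ℝ)) : Set (Fin n → ℝ) :=
  {y | ∀ x ∈ F, ∀ lam : ℝ, 0 ≤ lam → x + lam • y ∈ F}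

/-- Mode product `X ×₁ D ×₂ D ⋯ ×_d D` of a tensor with the matrix `D` on every mode. -/
def modeProd {d n p : ℕ} (X : Tensor d n) (D : Matrix (Fin p) (Fin n) ℝ) : Tensor d p :=
  fun i => ∑ j : Fin d → Fin n, X j * ∏ t, D (i t) (j t)

/-- The cone of completely positive tensors of order `d` and dimension `n`. -/
def CP (d n : ℕ) : Set (Tensor d n) :=
  {X | ∃ (k : ℕ) (y : Fin k → (Fin n → ℝ)), (∀ i j, 0 ≤ y i j) ∧ X = ∑ i, Md d (y i)}

/-- A tensor is copositive if `A x^d ≥ 0` for all entrywise nonnegative `x`. -/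
def Copos {d n : ℕ} (A : Tensor d n) : Prop :=
  ∀ x : Fin n → ℝ, (∀ j, 0 ≤ x j) → 0 ≤ tInner A (Md d x)

/-- The subtensor of `X` obtained by restricting all indices to the last `n` coordinates. -/
def restr {d n : ℕ} (X : Tensor d (n+1)) : Tensor d n :=
  fun i => X (fun t => Fin.succ (i t))

namespace Matrix

variable {ι R : Type*} [Fintype ι] {B : Matrix ι ι R}

theorem IsSymm.dotProduct_mulVec_comm [CommSemiring R] (hB : B.IsSymm) (u v : ι → R) :
    u ⬝ᵥ B *ᵥ v = v ⬝ᵥ B *ᵥ u := by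
  rw [dotProduct_mulVec, ← hB, vecMul_transpose, dotProduct_comm, hB]

theorem IsSymm.dotProduct_mulVec_add_smul [CommRing R] (hB : B.IsSymm) (x y : ι → R) (l : R) :
    (x + l • y) ⬝ᵥ B *ᵥ (x + l • y) =
      x ⬝ᵥ B *ᵥ x + 2 * l * (x ⬝ᵥ B *ᵥ y) + l ^ 2 * (y ⬝ᵥ B *ᵥ y) := by
  simp only [mulVec_add, mulVec_smul, add_dotProduct, dotProduct_add, smul_dotProduct,
    dotProduct_smul, smul_eq_mul, hB.dotProduct_mulVec_comm y x]
  ring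

end Matrix

/-- For a symmetric matrix `B` and `F = {x : xᵀBx = 0}`, the recession cone
of `F` is `{y : yᵀBy = 0 and xᵀBy = 0 for all x ∈ F}`. -/
theorem recCone_of_quadratic_eq {n : ℕ} (B : Matrix (Fin n) (Fin n) ℝ) (hB : B.IsSymm)
    (F : Set (Fin n → ℝ)) (hF : F = {x | x ⬝ᵥ B.mulVec x = 0}) :
    recCone F = {y | y ⬝ᵥ B.mulVec y = 0 ∧ ∀ x ∈ F, x ⬝ᵥ B.mulVec y = 0} := by
  subst hF
  ext y
  simp only [recCone, Set.mem_ofPred_eq, hB.dotProduct_mulVec_add_smul]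
  constructor
  · intro hy
    have hyy : y ⬝ᵥ B *ᵥ y = 0 := by simpa using hy 0 (by simp) 1 zero_le_one
    refine ⟨hyy, fun x hx => ?_⟩
    have := hy x hx 1 zero_le_one
    rw [hx, hyy] at this
    linarith
  · rintro ⟨hyy, hxy⟩ x hx l -
    rw [hx, hyy, hxy x hx]
    ring
end
end

section
/- Let f(x) = A_f^h x^d be a homogeneous polynomial of degree d with A_f^h ∈ S^{d,n}, and let f̄(y) = A_f^h (y_1,…,y_n)^d for y ∈ ℝ^{n+1} (i.e., the coefficient tensor of f zero-padded to Ā ∈ S^{d,n+1}). If the problems min f(x) over x ∈ F and min f̄(y) over y ∈ F̄ both have optimal solutions, then they share the same optimal value. -/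
/-! Dropping the last coordinate maps `F̄` into `F`, and appending the slack `1 - αᵀx` maps `F`
into `F̄`; both maps preserve the objective because `f̄` ignores the last coordinate. So each
optimal value bounds the other. -/

open Finset Matrix Pointwise

noncomputable section

def nonnegPolyhedron {m n : ℕ} (B : Matrix (Fin m) (Fin n) ℝ) (b : Fin m → ℝ) :
    Set (Fin n → ℝ) :=
  {x | (∀ i, (B *ᵥ x) i ≤ b i) ∧ ∀ j, 0 ≤ x j}

def homogenizedSet {p k : ℕ} (A : Matrix (Fin p) (Fin k) ℝ) (a : Fin k → ℝ) :
    Set (Fin k → ℝ) :=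
  {y | (∀ i, 0 ≤ (A *ᵥ y) i) ∧ a ⬝ᵥ y = 1}

theorem Fin.snoc_dotProduct {R : Type*} [NonUnitalNonAssocSemiring R] {n : ℕ}
    (v : Fin n → R) (c : R) (y : Fin (n+1) → R) :
    (Fin.snoc v c : Fin (n+1) → R) ⬝ᵥ y = v ⬝ᵥ Fin.init y + c * y (Fin.last n) := by
  simp [dotProduct, Fin.sum_univ_castSucc, Fin.init]

section HomogenizedMatrix

variable {R : Type*} [CommRing R] {m n : ℕ} {B : Matrix (Fin m) (Fin n) R} {b : Fin m → R}
  {a : Fin (n+1) → R} {A : Matrix (Fin (m + (n+1))) (Fin (n+1)) R}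

theorem mulVec_natAdd_of_identity_rows
    (hA : ∀ i j : Fin (n+1), A (Fin.natAdd m i) j = if i = j then 1 else 0)
    (y : Fin (n+1) → R) (i : Fin (n+1)) :
    (A *ᵥ y) (Fin.natAdd m i) = y i := by
  simp [mulVec, dotProduct, hA, ite_mul]

theorem mulVec_castAdd_of_homogenized_rows
    (hA : ∀ (i : Fin m) (j : Fin (n+1)),
      A (Fin.castAdd (n+1) i) j = b i * a j - (Fin.snoc (B i) 0 : Fin (n+1) → R) j)
    (y : Fin (n+1) → R) (i : Fin m) :
    (A *ᵥ y) (Fin.castAdd (n+1) i) = b i * (a ⬝ᵥ y) - (B *ᵥ Fin.init y) i := by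
  have hrow : (fun j => A (Fin.castAdd (n+1) i) j) = b i • a - Fin.snoc (B i) 0 := by
    funext j; simp [hA]
  simp only [mulVec, hrow, sub_dotProduct, smul_dotProduct, Fin.snoc_dotProduct, zero_mul,
    add_zero, smul_eq_mul]

end HomogenizedMatrix

section Homogenization

variable {m n : ℕ} {B : Matrix (Fin m) (Fin n) ℝ} {b : Fin m → ℝ}
  {A : Matrix (Fin (m + (n+1))) (Fin (n+1)) ℝ}

theorem init_mem_nonnegPolyhedron {a : Fin (n+1) → ℝ}
    (hA1 : ∀ (i : Fin m) (j : Fin (n+1)),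
      A (Fin.castAdd (n+1) i) j = b i * a j - (Fin.snoc (B i) 0 : Fin (n+1) → ℝ) j)
    (hA2 : ∀ i j : Fin (n+1), A (Fin.natAdd m i) j = if i = j then 1 else 0)
    {y : Fin (n+1) → ℝ} (hy : y ∈ homogenizedSet A a) :
    Fin.init y ∈ nonnegPolyhedron B b := by
  obtain ⟨hAy, hay⟩ := hy
  refine ⟨fun i => ?_, fun j => ?_⟩
  · have h := hAy (Fin.castAdd (n+1) i)
    rw [mulVec_castAdd_of_homogenized_rows hA1, hay, mul_one] at h
    linarith
  · simpa [mulVec_natAdd_of_identity_rows hA2, Fin.init] using hAy (Fin.natAdd m j.castSucc)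

theorem snoc_mem_homogenizedSet {al : Fin n → ℝ}
    (hA1 : ∀ (i : Fin m) (j : Fin (n+1)), A (Fin.castAdd (n+1) i) j =
      b i * (Fin.snoc al 1 : Fin (n+1) → ℝ) j - (Fin.snoc (B i) 0 : Fin (n+1) → ℝ) j)
    (hA2 : ∀ i j : Fin (n+1), A (Fin.natAdd m i) j = if i = j then 1 else 0)
    {x : Fin n → ℝ} (hx : x ∈ nonnegPolyhedron B b) (hal : al ⬝ᵥ x ≤ 1) :
    (Fin.snoc x (1 - al ⬝ᵥ x) : Fin (n+1) → ℝ) ∈ homogenizedSet A (Fin.snoc al 1) := by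
  obtain ⟨hBx, hx0⟩ := hx
  have hay : (Fin.snoc al 1 : Fin (n+1) → ℝ) ⬝ᵥ Fin.snoc x (1 - al ⬝ᵥ x) = 1 := by
    simp [Fin.snoc_dotProduct, Fin.init_snoc]
  refine ⟨fun i => ?_, hay⟩
  induction i using Fin.addCases with
  | left i =>
    rw [mulVec_castAdd_of_homogenized_rows hA1, hay, Fin.init_snoc]
    linarith [hBx i]
  | right j =>
    rw [mulVec_natAdd_of_identity_rows hA2]
    induction j using Fin.lastCases with
    | last => simpa using hal
    | cast j => simpa using hx0 j

end Homogenization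

theorem homogenized_same_value_general {d : ℕ}
{m n : ℕ} (B : Matrix (Fin m) (Fin n) ℝ) (b : Fin m → ℝ)
    (F : Set (Fin n → ℝ))
    (hF : F = {x | (∀ i, B.mulVec x i ≤ b i) ∧ ∀ j, 0 ≤ x j})
    (al : Fin n → ℝ) (halF : ∀ x ∈ F, al ⬝ᵥ x ≤ 1)
    (a : Fin (n+1) → ℝ) (ha : a = Fin.snoc al 1)
    (A : Matrix (Fin (m + (n+1))) (Fin (n+1)) ℝ)
    (hA1 : ∀ (i : Fin m) (j : Fin (n+1)),
      A (Fin.castAdd (n+1) i) j = b i * a j - (Fin.snoc (B i) 0 : Fin (n+1) → ℝ) j)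
    (hA2 : ∀ (i j : Fin (n+1)), A (Fin.natAdd m i) j = if i = j then 1 else 0)
    (Fb : Set (Fin (n+1) → ℝ))
    (hFb : Fb = {y | (∀ i, 0 ≤ A.mulVec y i) ∧ a ⬝ᵥ y = 1})
    (Ah : Tensor d n)
    (f : (Fin n → ℝ) → ℝ) (hf : ∀ x, f x = tInner Ah (Md d x))
    (fb : (Fin (n+1) → ℝ) → ℝ)
    (hfb : ∀ y, fb y = tInner Ah (Md d (fun i => y (Fin.castSucc i))))
    (xbar : Fin n → ℝ) (hx : xbar ∈ F) (hxopt : ∀ x ∈ F, f xbar ≤ f x)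
    (ybar : Fin (n+1) → ℝ) (hy : ybar ∈ Fb) (hyopt : ∀ y ∈ Fb, fb ybar ≤ fb y) :
    f xbar = fb ybar := by
  subst hF hFb ha
  have hfb_init (y : Fin (n+1) → ℝ) : fb y = f (Fin.init y) := by rw [hfb, hf]; rfl
  have hlift := snoc_mem_homogenizedSet hA1 hA2 hx (halF xbar hx)
  apply le_antisymm
  · rw [hfb_init]
    exact hxopt _ (init_mem_nonnegPolyhedron hA1 hA2 hy)
  · calc fb ybar ≤ fb (Fin.snoc xbar (1 - al ⬝ᵥ xbar)) := hyopt _ hlift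
      _ = f xbar := by rw [hfb_init, Fin.init_snoc]

/-- The homogeneous POP over `F = {x : Bx ≤ b, x ≥ 0}` and its homogenized
problem over `F̄ = {y : Ay ≥ 0, aᵀy = 1}` share the same optimal value. -/
theorem homogenized_same_value {d : ℕ}
{m n : ℕ} (B : Matrix (Fin m) (Fin n) ℝ) (b : Fin m → ℝ)
    (F : Set (Fin n → ℝ))
    (hF : F = {x | (∀ i, B.mulVec x i ≤ b i) ∧ ∀ j, 0 ≤ x j})
    (al : Fin n → ℝ) (hal : ∀ j, 0 ≤ al j) (halF : ∀ x ∈ F, al ⬝ᵥ x ≤ 1)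
    (a : Fin (n+1) → ℝ) (ha : a = Fin.snoc al 1)
    (A : Matrix (Fin (m + (n+1))) (Fin (n+1)) ℝ)
    (hA1 : ∀ (i : Fin m) (j : Fin (n+1)),
      A (Fin.castAdd (n+1) i) j = b i * a j - (Fin.snoc (B i) 0 : Fin (n+1) → ℝ) j)
    (hA2 : ∀ (i j : Fin (n+1)), A (Fin.natAdd m i) j = if i = j then 1 else 0)
    (Fb : Set (Fin (n+1) → ℝ))
    (hFb : Fb = {y | (∀ i, 0 ≤ A.mulVec y i) ∧ a ⬝ᵥ y = 1})
    (Ah : Tensor d n) (hsym : IsSymT Ah)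
    (f : (Fin n → ℝ) → ℝ) (hf : ∀ x, f x = tInner Ah (Md d x))
    (fb : (Fin (n+1) → ℝ) → ℝ)
    (hfb : ∀ y, fb y = tInner Ah (Md d (fun i => y (Fin.castSucc i))))
    (xbar : Fin n → ℝ) (hx : xbar ∈ F) (hxopt : ∀ x ∈ F, f xbar ≤ f x)
    (ybar : Fin (n+1) → ℝ) (hy : ybar ∈ Fb) (hyopt : ∀ y ∈ Fb, fb ybar ≤ fb y) :
    f xbar = fb ybar :=
  homogenized_same_value_general B b F hF al halF a ha A hA1 hA2 Fb hFb Ah f hf fb hfb xbar hx hxopt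
    ybar hy hyopt
end
end

section
/- Let f(x) = A_f^h x^d be a homogeneous polynomial of degree d with A_f^h ∈ S^{d,n}, and let f̄(y) = A_f^h (y_1,…,y_n)^d for y ∈ ℝ^{n+1}. Then x̄ ∈ ℝ^n is an optimal solution of min f(x) over x ∈ F if and only if ȳ = (x̄ᵀ, 1 − αᵀx̄)ᵀ ∈ ℝ^{n+1} is an optimal solution of min f̄(y) over y ∈ F̄ (assuming both problems have optimal solutions). -/
/-!
The maps `x ↦ (x, 1 - αᵀx)` and `y ↦ (y₁, …, yₙ)` carry `F` into `F̄` and `F̄` into `F`: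
once `aᵀy = 1`, the first `m` rows of `A y ≥ 0` read `B (y₁, …, yₙ) ≤ b`, the remaining rows
say `y ≥ 0`, and the last coordinate `1 - αᵀx` is nonnegative because `αᵀx ≤ 1` on `F`.
The second map is a left inverse of the first and `f̄ = f ∘ (y ↦ (y₁, …, yₙ))`, so a minimizer
of one problem is carried to a minimizer of the other.
-/

open Finset Matrix Pointwise

noncomputable section

theorem Fin.snoc_dotProduct_snoc {R : Type*} [NonUnitalNonAssocSemiring R] {n : ℕ}
    (u v : Fin n → R) (c e : R) :
    (Fin.snoc u c : Fin (n+1) → R) ⬝ᵥ Fin.snoc v e = u ⬝ᵥ v + c * e := by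
  simp [dotProduct, Fin.sum_univ_castSucc]

theorem Fin.snoc_zero_dotProduct {R : Type*} [NonUnitalNonAssocSemiring R] {n : ℕ}
    (u : Fin n → R) (y : Fin (n+1) → R) :
    (Fin.snoc u 0 : Fin (n+1) → R) ⬝ᵥ y = u ⬝ᵥ Fin.init y := by
  conv_lhs => rw [← Fin.snoc_init_self y]
  rw [Fin.snoc_dotProduct_snoc, zero_mul, add_zero]

theorem mem_isMinOn_iff_of_leftInverse {α β γ : Type*} [Preorder γ] {S : Set α} {T : Set β}
    {f : α → γ} {g : β → γ} {ι : α → β} {π : β → α}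
    (hι : Set.MapsTo ι S T) (hπ : Set.MapsTo π T S) (hπι : Function.LeftInverse π ι)
    (hg : ∀ y, g y = f (π y)) (x : α) :
    (x ∈ S ∧ IsMinOn f S x) ↔ (ι x ∈ T ∧ IsMinOn g T (ι x)) := by
  simp only [isMinOn_iff, hg, hπι x]
  constructor
  · rintro ⟨hx, hmin⟩
    exact ⟨hι hx, fun y hy => hmin _ (hπ hy)⟩
  · rintro ⟨hx, hmin⟩
    refine ⟨hπι x ▸ hπ hx, fun x' hx' => ?_⟩
    simpa only [hπι x'] using hmin _ (hι hx')

section HomogenizedConstraints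

variable {R : Type*} [Ring R] {m n : ℕ} {B : Matrix (Fin m) (Fin n) R} {b : Fin m → R}
  {a : Fin (n+1) → R} {A : Matrix (Fin (m + (n+1))) (Fin (n+1)) R}

theorem mulVec_castAdd_of_rows
    (hA1 : ∀ (i : Fin m) (j : Fin (n+1)),
      A (Fin.castAdd (n+1) i) j = b i * a j - (Fin.snoc (B i) 0 : Fin (n+1) → R) j)
    (y : Fin (n+1) → R) (i : Fin m) :
    (A *ᵥ y) (Fin.castAdd (n+1) i) = b i * (a ⬝ᵥ y) - (B *ᵥ Fin.init y) i := by
  have hrow : A (Fin.castAdd (n+1) i) = b i • a - Fin.snoc (B i) 0 := funext (hA1 i)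
  rw [mulVec, hrow, sub_dotProduct, smul_dotProduct, Fin.snoc_zero_dotProduct, smul_eq_mul]
  rfl

theorem mulVec_natAdd_of_rows
    (hA2 : ∀ (i j : Fin (n+1)), A (Fin.natAdd m i) j = if i = j then 1 else 0)
    (y : Fin (n+1) → R) (i : Fin (n+1)) :
    (A *ᵥ y) (Fin.natAdd m i) = y i := by
  simp [mulVec, dotProduct, hA2, ite_mul]

theorem mem_homogenized_iff [PartialOrder R] [IsOrderedAddMonoid R]
    (hA1 : ∀ (i : Fin m) (j : Fin (n+1)),
      A (Fin.castAdd (n+1) i) j = b i * a j - (Fin.snoc (B i) 0 : Fin (n+1) → R) j)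
    (hA2 : ∀ (i j : Fin (n+1)), A (Fin.natAdd m i) j = if i = j then 1 else 0)
    (y : Fin (n+1) → R) :
    y ∈ {y | (∀ i, 0 ≤ A.mulVec y i) ∧ a ⬝ᵥ y = 1} ↔
      Fin.init y ∈ {x | (∀ i, B.mulVec x i ≤ b i) ∧ ∀ j, 0 ≤ x j} ∧
        0 ≤ y (Fin.last n) ∧ a ⬝ᵥ y = 1 := by
  simp only [Set.mem_ofPred_eq, Fin.forall_fin_add (P := fun i => 0 ≤ (A *ᵥ y) i),
    mulVec_castAdd_of_rows hA1, mulVec_natAdd_of_rows hA2,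
    Fin.forall_iff_castSucc (P := fun j => 0 ≤ y j)]
  constructor
  · rintro ⟨⟨hB, hlast, hinit⟩, hy⟩
    simp only [hy, mul_one, sub_nonneg] at hB
    exact ⟨⟨hB, hinit⟩, hlast, hy⟩
  · rintro ⟨⟨hB, hinit⟩, hlast, hy⟩
    simp only [hy, mul_one, sub_nonneg, and_true]
    exact ⟨hB, hlast, hinit⟩

end HomogenizedConstraints

theorem homogenized_optimal_iff_general {d : ℕ}
{m n : ℕ} (B : Matrix (Fin m) (Fin n) ℝ) (b : Fin m → ℝ)
    (F : Set (Fin n → ℝ))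
    (hF : F = {x | (∀ i, B.mulVec x i ≤ b i) ∧ ∀ j, 0 ≤ x j})
    (al : Fin n → ℝ) (halF : ∀ x ∈ F, al ⬝ᵥ x ≤ 1)
    (a : Fin (n+1) → ℝ) (ha : a = Fin.snoc al 1)
    (A : Matrix (Fin (m + (n+1))) (Fin (n+1)) ℝ)
    (hA1 : ∀ (i : Fin m) (j : Fin (n+1)),
      A (Fin.castAdd (n+1) i) j = b i * a j - (Fin.snoc (B i) 0 : Fin (n+1) → ℝ) j)
    (hA2 : ∀ (i j : Fin (n+1)), A (Fin.natAdd m i) j = if i = j then 1 else 0)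
    (Fb : Set (Fin (n+1) → ℝ))
    (hFb : Fb = {y | (∀ i, 0 ≤ A.mulVec y i) ∧ a ⬝ᵥ y = 1})
    (Ah : Tensor d n)
    (f : (Fin n → ℝ) → ℝ) (hf : ∀ x, f x = tInner Ah (Md d x))
    (fb : (Fin (n+1) → ℝ) → ℝ)
    (hfb : ∀ y, fb y = tInner Ah (Md d (fun i => y (Fin.castSucc i))))
    (xbar : Fin n → ℝ) :
    (xbar ∈ F ∧ ∀ x ∈ F, f xbar ≤ f x) ↔
    ((Fin.snoc xbar (1 - al ⬝ᵥ xbar) : Fin (n+1) → ℝ) ∈ Fb ∧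
      ∀ y ∈ Fb, fb (Fin.snoc xbar (1 - al ⬝ᵥ xbar)) ≤ fb y) := by
  have hmem : ∀ y, y ∈ Fb ↔ Fin.init y ∈ F ∧ 0 ≤ y (Fin.last n) ∧ a ⬝ᵥ y = 1 := by
    subst hF hFb
    exact mem_homogenized_iff hA1 hA2
  have hlift : Set.MapsTo (fun x => Fin.snoc x (1 - al ⬝ᵥ x)) F Fb := fun x hx => by
    dsimp only
    rw [hmem, Fin.init_snoc, Fin.snoc_last, ha, Fin.snoc_dotProduct_snoc]
    exact ⟨hx, sub_nonneg.mpr (halF x hx), by ring⟩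
  have hinit : Set.MapsTo Fin.init Fb F := fun y hy => ((hmem y).mp hy).1
  simpa only [isMinOn_iff] using
    mem_isMinOn_iff_of_leftInverse hlift hinit (fun x => Fin.init_snoc (α := fun _ => ℝ) _ x)
      (fun y => (hfb y).trans (hf _).symm) xbar

/-- `x̄` is optimal for the POP over `F` iff
`ȳ = (x̄ᵀ, 1 − αᵀx̄)ᵀ` is optimal for the homogenized problem over `F̄`
(assuming both problems have optimal solutions). -/
theorem homogenized_optimal_iff {d : ℕ}
{m n : ℕ} (B : Matrix (Fin m) (Fin n) ℝ) (b : Fin m → ℝ)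
    (F : Set (Fin n → ℝ))
    (hF : F = {x | (∀ i, B.mulVec x i ≤ b i) ∧ ∀ j, 0 ≤ x j})
    (al : Fin n → ℝ) (hal : ∀ j, 0 ≤ al j) (halF : ∀ x ∈ F, al ⬝ᵥ x ≤ 1)
    (a : Fin (n+1) → ℝ) (ha : a = Fin.snoc al 1)
    (A : Matrix (Fin (m + (n+1))) (Fin (n+1)) ℝ)
    (hA1 : ∀ (i : Fin m) (j : Fin (n+1)),
      A (Fin.castAdd (n+1) i) j = b i * a j - (Fin.snoc (B i) 0 : Fin (n+1) → ℝ) j)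
    (hA2 : ∀ (i j : Fin (n+1)), A (Fin.natAdd m i) j = if i = j then 1 else 0)
    (Fb : Set (Fin (n+1) → ℝ))
    (hFb : Fb = {y | (∀ i, 0 ≤ A.mulVec y i) ∧ a ⬝ᵥ y = 1})
    (Ah : Tensor d n) (hsym : IsSymT Ah)
    (f : (Fin n → ℝ) → ℝ) (hf : ∀ x, f x = tInner Ah (Md d x))
    (fb : (Fin (n+1) → ℝ) → ℝ)
    (hfb : ∀ y, fb y = tInner Ah (Md d (fun i => y (Fin.castSucc i))))
    (hexF : ∃ x₀ ∈ F, ∀ x ∈ F, f x₀ ≤ f x)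
    (hexFb : ∃ y₀ ∈ Fb, ∀ y ∈ Fb, fb y₀ ≤ fb y)
    (xbar : Fin n → ℝ) :
    (xbar ∈ F ∧ ∀ x ∈ F, f xbar ≤ f x) ↔
    ((Fin.snoc xbar (1 - al ⬝ᵥ xbar) : Fin (n+1) → ℝ) ∈ Fb ∧
      ∀ y ∈ Fb, fb (Fin.snoc xbar (1 - al ⬝ᵥ xbar)) ≤ fb y) :=
  homogenized_optimal_iff_general B b F hF al halF a ha A hA1 hA2 Fb hFb Ah f hf fb hfb xbar
end
end
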